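/- arXiv:2007.10625 — 3 statements merged into one kernel-verified Lean document; each statement's English description precedes it below -/
import Mathlib

section
/- The set of pairs of integers (p, q) with p ≥ 3, q ≥ 3, K(p,q) = 1/p + 1/q − 1/2 < 0, such that (p = 3 or 1/(p−1) + 1/q − 1/2 ≥ 0) and (q = 3 or 1/p + 1/(q−1) − 1/2 ≥ 0), is exactly the four-element set {(3,7), (7,3), (4,5), (5,4)}. In particular, there are exactly 4 geometry-minimal hyperbolic types of periodic two-dimensional tilings of Dress complexity 1. -/
/-!
Clearing denominators, `1/p + 1/q - 1/2 = (4 - (p-2)(q-2)) / (2pq)`, so `(p, q)` is hyperbolic iff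
`(p-2)(q-2) > 4`, and lowering `p` to `p - 1` keeps the curvature nonnegative iff `(p-3)(q-2) ≤ 4`.
Since `q - 2 ≥ 1`, the latter forces `p ≤ 7`, and symmetrically `q ≤ 7`; the remaining
`5 × 5` integer cases are checked directly.
-/

section Curvature

variable {K : Type*} [Field K] [LinearOrder K] [IsStrictOrderedRing K]

theorem one_div_add_one_div_sub_half_eq {p q : K} (hp : p ≠ 0) (hq : q ≠ 0) :
    1 / p + 1 / q - 1 / 2 = (4 - (p - 2) * (q - 2)) / (2 * p * q) := by
  field_simp
  ring

theorem one_div_add_one_div_sub_half_nonneg_iff {p q : K} (hp : 0 < p) (hq : 0 < q) :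
    0 ≤ 1 / p + 1 / q - 1 / 2 ↔ (p - 2) * (q - 2) ≤ 4 := by
  rw [one_div_add_one_div_sub_half_eq hp.ne' hq.ne', le_div_iff₀ (by positivity), zero_mul,
    sub_nonneg]

theorem one_div_add_one_div_sub_half_neg_iff {p q : K} (hp : 0 < p) (hq : 0 < q) :
    1 / p + 1 / q - 1 / 2 < 0 ↔ 4 < (p - 2) * (q - 2) := by
  simpa only [not_le] using (one_div_add_one_div_sub_half_nonneg_iff hp hq).not

end Curvature

def geometryMinimalHyperbolicPairs : Set (ℤ × ℤ) :=
  {pq : ℤ × ℤ | 3 ≤ pq.1 ∧ 3 ≤ pq.2 ∧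
    1 / (pq.1 : ℚ) + 1 / (pq.2 : ℚ) - 1 / 2 < 0 ∧
    (pq.1 = 3 ∨ 0 ≤ 1 / ((pq.1 : ℚ) - 1) + 1 / (pq.2 : ℚ) - 1 / 2) ∧
    (pq.2 = 3 ∨ 0 ≤ 1 / (pq.1 : ℚ) + 1 / ((pq.2 : ℚ) - 1) - 1 / 2)}

theorem mem_geometryMinimalHyperbolicPairs_iff {p q : ℤ} :
    (p, q) ∈ geometryMinimalHyperbolicPairs ↔
      3 ≤ p ∧ 3 ≤ q ∧ 4 < (p - 2) * (q - 2) ∧ (p = 3 ∨ (p - 3) * (q - 2) ≤ 4) ∧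
        (q = 3 ∨ (p - 2) * (q - 3) ≤ 4) := by
  refine and_congr_right fun hp ↦ and_congr_right fun hq ↦ ?_
  have hp' : (3 : ℚ) ≤ p := by exact_mod_cast hp
  have hq' : (3 : ℚ) ≤ q := by exact_mod_cast hq
  rw [one_div_add_one_div_sub_half_neg_iff (by linarith) (by linarith),
    one_div_add_one_div_sub_half_nonneg_iff (by linarith) (by linarith),
    one_div_add_one_div_sub_half_nonneg_iff (by linarith) (by linarith),
    sub_sub, sub_sub]
  norm_num
  norm_cast

theorem le_seven_of_sub_three_mul_le_four {p q : ℤ} (hq : 3 ≤ q) (h : (p - 3) * (q - 2) ≤ 4) :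
    p ≤ 7 := by
  nlinarith

theorem geometryMinimalHyperbolicPairs_eq :
    geometryMinimalHyperbolicPairs = {(3, 7), (7, 3), (4, 5), (5, 4)} := by
  ext ⟨p, q⟩
  simp only [mem_geometryMinimalHyperbolicPairs_iff, Set.mem_insert_iff, Set.mem_singleton_iff,
    Prod.mk.injEq]
  constructor
  · rintro ⟨hp, hq, hK, hpmin, hqmin⟩
    have hp7 : p ≤ 7 := hpmin.elim (fun h ↦ by omega) (le_seven_of_sub_three_mul_le_four hq)
    have hq7 : q ≤ 7 := hqmin.elim (fun h ↦ by omega)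
      (fun h ↦ le_seven_of_sub_three_mul_le_four hp (by linarith))
    interval_cases p <;> interval_cases q <;> omega
  · rintro (⟨rfl, rfl⟩ | ⟨rfl, rfl⟩ | ⟨rfl, rfl⟩ | ⟨rfl, rfl⟩) <;> norm_num

/-- The set of pairs of integers `(p, q)` with `p ≥ 3`, `q ≥ 3`,
`K(p,q) = 1/p + 1/q − 1/2 < 0`, such that `(p = 3 or 1/(p−1) + 1/q − 1/2 ≥ 0)` and
`(q = 3 or 1/p + 1/(q−1) − 1/2 ≥ 0)`, is exactly `{(3,7), (7,3), (4,5), (5,4)}`;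
in particular, there are exactly 4 geometry-minimal hyperbolic types of periodic
two-dimensional tilings of Dress complexity 1. -/
theorem geometry_minimal_hyperbolic_pairs_complexity_one :
    {pq : ℤ × ℤ | 3 ≤ pq.1 ∧ 3 ≤ pq.2 ∧
        1 / (pq.1 : ℚ) + 1 / (pq.2 : ℚ) - 1 / 2 < 0 ∧
        (pq.1 = 3 ∨ 0 ≤ 1 / ((pq.1 : ℚ) - 1) + 1 / (pq.2 : ℚ) - 1 / 2) ∧
        (pq.2 = 3 ∨ 0 ≤ 1 / (pq.1 : ℚ) + 1 / ((pq.2 : ℚ) - 1) - 1 / 2)} =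
      ({(3, 7), (7, 3), (4, 5), (5, 4)} : Set (ℤ × ℤ)) ∧
    {pq : ℤ × ℤ | 3 ≤ pq.1 ∧ 3 ≤ pq.2 ∧
        1 / (pq.1 : ℚ) + 1 / (pq.2 : ℚ) - 1 / 2 < 0 ∧
        (pq.1 = 3 ∨ 0 ≤ 1 / ((pq.1 : ℚ) - 1) + 1 / (pq.2 : ℚ) - 1 / 2) ∧
        (pq.2 = 3 ∨ 0 ≤ 1 / (pq.1 : ℚ) + 1 / ((pq.2 : ℚ) - 1) - 1 / 2)}.ncard = 4 := by
  refine ⟨geometryMinimalHyperbolicPairs_eq, ?_⟩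
  change geometryMinimalHyperbolicPairs.ncard = 4
  rw [geometryMinimalHyperbolicPairs_eq, Set.ncard_eq_toFinset_card']
  rfl
end

section
/- The set of pairs of integers (p, q) with p ≥ 3, q ≥ 3 that are geometry-minimal — i.e., such that either [1/p + 1/q − 1/2 > 0 and (both p ≤ 4 and q ≤ 4, or {p, q} = {3, 5})], or [1/p + 1/q − 1/2 = 0], or [1/p + 1/q − 1/2 < 0 and (p = 3 or 1/(p−1) + 1/q − 1/2 ≥ 0) and (q = 3 or 1/p + 1/(q−1) − 1/2 ≥ 0)] — is exactly the twelve-element set {(3,3), (3,4), (4,3), (3,5), (5,3), (3,6), (6,3), (4,4), (3,7), (7,3), (4,5), (5,4)}. In particular, there exist exactly 12 different equivariant types of geometry-minimal periodic two-dimensional tilings with Dress complexity 1 (with all tiles having at least 3 edges). -/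
set_option maxHeartbeats 1000000


lemma Kpos (a b : ℤ) (ha : 0 < a) (hb : 0 < b) :
    0 < 1/(a:ℚ) + 1/(b:ℚ) - 1/2 ↔ a*b < 2*a+2*b := by
  have ha' : (0:ℚ) < a := by exact_mod_cast ha
  have hb' : (0:ℚ) < b := by exact_mod_cast hb
  have hd : (0:ℚ) < 2*(a:ℚ)*(b:ℚ) := by positivity
  have key : 1/(a:ℚ)+1/(b:ℚ)-1/2 = (2*a+2*b-(a:ℚ)*b)/(2*a*b) := by
    field_simp; ring
  rw [key, lt_div_iff₀ hd, zero_mul, sub_pos]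
  exact_mod_cast Iff.symm Int.cast_lt

lemma Keq (a b : ℤ) (ha : 0 < a) (hb : 0 < b) :
    1/(a:ℚ) + 1/(b:ℚ) - 1/2 = 0 ↔ a*b = 2*a+2*b := by
  have ha' : (0:ℚ) < a := by exact_mod_cast ha
  have hb' : (0:ℚ) < b := by exact_mod_cast hb
  have hd : (2*(a:ℚ)*(b:ℚ)) ≠ 0 := by positivity
  have key : 1/(a:ℚ)+1/(b:ℚ)-1/2 = (2*a+2*b-(a:ℚ)*b)/(2*a*b) := by
    field_simp; ring
  rw [key, div_eq_zero_iff]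
  constructor
  · rintro (h | h)
    · have : (a:ℚ)*b = 2*a+2*b := by linarith
      exact_mod_cast this
    · exact absurd h hd
  · intro h; left
    have : (a:ℚ)*b = 2*a+2*b := by exact_mod_cast h
    linarith

lemma Kneg (a b : ℤ) (ha : 0 < a) (hb : 0 < b) :
    1/(a:ℚ) + 1/(b:ℚ) - 1/2 < 0 ↔ 2*a+2*b < a*b := by
  have ha' : (0:ℚ) < a := by exact_mod_cast ha
  have hb' : (0:ℚ) < b := by exact_mod_cast hb
  have hd : (0:ℚ) < 2*(a:ℚ)*(b:ℚ) := by positivity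
  have key : 1/(a:ℚ)+1/(b:ℚ)-1/2 = (2*a+2*b-(a:ℚ)*b)/(2*a*b) := by
    field_simp; ring
  rw [key, div_neg_iff]
  constructor
  · rintro (⟨_, h⟩ | ⟨h, _⟩)
    · linarith
    · have : (2:ℚ)*a+2*b < a*b := by linarith
      exact_mod_cast this
  · intro h; right
    refine ⟨?_, hd⟩
    have : (2:ℚ)*a+2*b < a*b := by exact_mod_cast h
    linarith

lemma Kge (a b : ℤ) (ha : 0 < a) (hb : 0 < b) :
    0 ≤ 1/(a:ℚ) + 1/(b:ℚ) - 1/2 ↔ a*b ≤ 2*a+2*b := by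
  rw [le_iff_lt_or_eq, le_iff_lt_or_eq, Kpos a b ha hb, eq_comm, Keq a b ha hb]



/-- The set of pairs of integers `(p, q)` with `p ≥ 3`, `q ≥ 3` that are
geometry-minimal — i.e. either spherical (`K(p,q) > 0`) with (`p ≤ 4` and `q ≤ 4`,
or `{p, q} = {3, 5}`), or euclidean (`K(p,q) = 0`), or hyperbolic (`K(p,q) < 0`)
with `(p = 3 or 1/(p−1) + 1/q − 1/2 ≥ 0)` and `(q = 3 or 1/p + 1/(q−1) − 1/2 ≥ 0)` —
is exactly the twelve-element set
`{(3,3), (3,4), (4,3), (3,5), (5,3), (3,6), (6,3), (4,4), (3,7), (7,3), (4,5), (5,4)}`;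
in particular, there exist exactly 12 different equivariant types of geometry-minimal
periodic two-dimensional tilings with Dress complexity 1. -/
theorem geometry_minimal_pairs_complexity_one :
    {pq : ℤ × ℤ | 3 ≤ pq.1 ∧ 3 ≤ pq.2 ∧
        ((0 < 1 / (pq.1 : ℚ) + 1 / (pq.2 : ℚ) - 1 / 2 ∧
            ((pq.1 ≤ 4 ∧ pq.2 ≤ 4) ∨ ({pq.1, pq.2} : Set ℤ) = {3, 5})) ∨
          (1 / (pq.1 : ℚ) + 1 / (pq.2 : ℚ) - 1 / 2 = 0) ∨
          (1 / (pq.1 : ℚ) + 1 / (pq.2 : ℚ) - 1 / 2 < 0 ∧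
            (pq.1 = 3 ∨ 0 ≤ 1 / ((pq.1 : ℚ) - 1) + 1 / (pq.2 : ℚ) - 1 / 2) ∧
            (pq.2 = 3 ∨ 0 ≤ 1 / (pq.1 : ℚ) + 1 / ((pq.2 : ℚ) - 1) - 1 / 2)))} =
      ({(3, 3), (3, 4), (4, 3), (3, 5), (5, 3), (3, 6), (6, 3), (4, 4),
        (3, 7), (7, 3), (4, 5), (5, 4)} : Set (ℤ × ℤ)) ∧
    {pq : ℤ × ℤ | 3 ≤ pq.1 ∧ 3 ≤ pq.2 ∧
        ((0 < 1 / (pq.1 : ℚ) + 1 / (pq.2 : ℚ) - 1 / 2 ∧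
            ((pq.1 ≤ 4 ∧ pq.2 ≤ 4) ∨ ({pq.1, pq.2} : Set ℤ) = {3, 5})) ∨
          (1 / (pq.1 : ℚ) + 1 / (pq.2 : ℚ) - 1 / 2 = 0) ∨
          (1 / (pq.1 : ℚ) + 1 / (pq.2 : ℚ) - 1 / 2 < 0 ∧
            (pq.1 = 3 ∨ 0 ≤ 1 / ((pq.1 : ℚ) - 1) + 1 / (pq.2 : ℚ) - 1 / 2) ∧
            (pq.2 = 3 ∨ 0 ≤ 1 / (pq.1 : ℚ) + 1 / ((pq.2 : ℚ) - 1) - 1 / 2)))}.ncard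
      = 12 := by
  have hset : {pq : ℤ × ℤ | 3 ≤ pq.1 ∧ 3 ≤ pq.2 ∧
        ((0 < 1 / (pq.1 : ℚ) + 1 / (pq.2 : ℚ) - 1 / 2 ∧
            ((pq.1 ≤ 4 ∧ pq.2 ≤ 4) ∨ ({pq.1, pq.2} : Set ℤ) = {3, 5})) ∨
          (1 / (pq.1 : ℚ) + 1 / (pq.2 : ℚ) - 1 / 2 = 0) ∨
          (1 / (pq.1 : ℚ) + 1 / (pq.2 : ℚ) - 1 / 2 < 0 ∧
            (pq.1 = 3 ∨ 0 ≤ 1 / ((pq.1 : ℚ) - 1) + 1 / (pq.2 : ℚ) - 1 / 2) ∧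
            (pq.2 = 3 ∨ 0 ≤ 1 / (pq.1 : ℚ) + 1 / ((pq.2 : ℚ) - 1) - 1 / 2)))} =
      ({(3, 3), (3, 4), (4, 3), (3, 5), (5, 3), (3, 6), (6, 3), (4, 4),
        (3, 7), (7, 3), (4, 5), (5, 4)} : Set (ℤ × ℤ)) := by
    ext ⟨p, q⟩
    simp only [Set.mem_setOf_eq, Set.mem_insert_iff, Set.mem_singleton_iff, Prod.mk.injEq]
    constructor
    · rintro ⟨hp, hq, h⟩
      have hp0 : (0:ℤ) < p := by omega
      have hq0 : (0:ℤ) < q := by omega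
      have hp1 : (0:ℤ) < p - 1 := by omega
      have hq1 : (0:ℤ) < q - 1 := by omega
      rw [Kpos p q hp0 hq0, Keq p q hp0 hq0, Kneg p q hp0 hq0,
          show ((p:ℚ) - 1) = ((p-1:ℤ):ℚ) by push_cast; ring,
          show ((q:ℚ) - 1) = ((q-1:ℤ):ℚ) by push_cast; ring,
          Kge (p-1) q hp1 hq0, Kge p (q-1) hp0 hq1, Set.pair_eq_pair_iff] at h
      have hpb : p ≤ 7 := by
        rcases h with ⟨_, ⟨h1, _⟩ | h1⟩ | h1 | ⟨hK, h3 | hA, _⟩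
        · omega
        · omega
        · nlinarith
        · omega
        · nlinarith
      have hqb : q ≤ 7 := by
        rcases h with ⟨_, ⟨_, h1⟩ | h1⟩ | h1 | ⟨hK, _, h3 | hB⟩
        · omega
        · omega
        · nlinarith
        · omega
        · nlinarith
      interval_cases p <;> interval_cases q <;> omega
    · rintro (⟨h1, h2⟩|⟨h1, h2⟩|⟨h1, h2⟩|⟨h1, h2⟩|⟨h1, h2⟩|⟨h1, h2⟩|⟨h1, h2⟩|⟨h1, h2⟩|⟨h1, h2⟩|⟨h1, h2⟩|⟨h1, h2⟩|⟨h1, h2⟩) <;>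
        subst h1 <;> subst h2 <;> norm_num [Set.pair_eq_pair_iff]
  refine ⟨hset, ?_⟩
  rw [hset, show ({(3, 3), (3, 4), (4, 3), (3, 5), (5, 3), (3, 6), (6, 3), (4, 4),
        (3, 7), (7, 3), (4, 5), (5, 4)} : Set (ℤ × ℤ)) =
      (↑({(3, 3), (3, 4), (4, 3), (3, 5), (5, 3), (3, 6), (6, 3), (4, 4),
        (3, 7), (7, 3), (4, 5), (5, 4)} : Finset (ℤ × ℤ)) : Set (ℤ × ℤ)) by simp,
     Set.ncard_coe_finset]
  decide
end

section
/- Let D be a finite set with n ≥ 1 elements, let σ₀, σ₁, σ₂ : D → D be involutions such that the subgroup of permutations they generate acts transitively on D (a Delaney–Dress graph), and let d₀ ∈ D be a chosen initial node. For a bijection f : D → {0, 1, …, n−1} and an element x ∈ D, define key_f(x) to be the lexicographic minimum of the set {(f(z), i) : z ∈ D, i ∈ {0,1,2}, σᵢ(z) = x} ⊆ ℕ × {0,1,2}. Then there exists exactly one bijection f : D → {0, 1, …, n−1} with f(d₀) = 0 such that for all x, y ∈ D with x ≠ d₀ and y ≠ d₀: f(x) < f(y) if and only if key_f(x) is lexicographically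 smaller than key_f(y). (This is the unique ordered traversal: the breadth-first traversal starting at d₀ in which at each node the incident edges are visited in the order of their colors 0, 1, 2.) -/
open scoped Classical

/-- The set of "keys" of an element `x`: the pairs `(f z, i)` (as elements of
`ℕ ×ₗ ℕ`, ordered lexicographically) such that the `i`-neighbor of `z` is `x`. -/
def keySet {D : Type*} {n : ℕ} (σ : Fin 3 → Equiv.Perm D) (f : D ≃ Fin n) (x : D) :
    Set (ℕ ×ₗ ℕ) :=
  {p | ∃ (z : D) (i : Fin 3), σ i z = x ∧ p = toLex (((f z : ℕ)), ((i : ℕ)))}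

/-!
Uniqueness. In an ordered numbering `f` the least key `(j, i)` of a node `x ≠ d₀` has
`j < f x`: otherwise the nodes numbered below `x` would form a proper nonempty set closed
under every `σ i`, contradicting transitivity. So if two ordered numberings `f`, `g` agree
on the nodes numbered below `k`, the least keys of the nodes `x` and `w` with
`f x = k = g w` are computed from those nodes, and `x ≠ w` would give
`key_g x ≤ key_f x < key_f w ≤ key_g w < key_g x`.

Existence. Number the nodes greedily: node `m + 1` is the neighbour `σ i (node j)` for the
lexicographically least pair `(j, i)`, `j ≤ m`, that leads out of the nodes numbered so far.
That pair is the least key of node `m + 1`, and these least pairs increase with `m`.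
-/

open Set

theorem Equiv.eqOn_setOf_lt_right {α β : Type*} [Preorder β] {f g : α ≃ β} {b : β}
    (h : EqOn f g {z | f z < b}) : EqOn f g {z | g z < b} := by
  intro z hz
  obtain ⟨w, hw⟩ := f.surjective (g z)
  obtain rfl : w = z := g.injective ((h (show f w < b from hw ▸ hz)).symm.trans hw)
  exact hw

open scoped Pointwise in
theorem Set.eq_univ_of_forall_mapsTo_of_isPretransitive {ι α : Type*} [Finite α]
    {σ : ι → Equiv.Perm α} [MulAction.IsPretransitive (Subgroup.closure (range σ)) α]
    {P : Set α} (hP : P.Nonempty) (hσ : ∀ i, MapsTo (σ i) P P) : P = univ := by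
  have hstab : Subgroup.closure (range σ) ≤ MulAction.stabilizer (Equiv.Perm α) P := by
    refine (Subgroup.closure_le _).2 (range_subset_iff.2 fun i => ?_)
    rw [SetLike.mem_coe, MulAction.mem_stabilizer_iff, ← Set.image_smul]
    exact ((toFinite P).injOn_iff_bijOn_of_mapsTo (hσ i)).1 (σ i).injective.injOn |>.image_eq
  obtain ⟨a, ha⟩ := hP
  refine eq_univ_of_forall fun x => ?_
  obtain ⟨g, rfl⟩ := MulAction.exists_smul_eq (Subgroup.closure (range σ)) a x
  rw [Subgroup.smul_def, ← MulAction.mem_stabilizer_iff.1 (hstab g.2)]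
  exact Set.smul_mem_smul_set ha

theorem Set.injOn_Iio_of_forall_notMem_image_Iic {α : Type*} {t : ℕ → α} {N : ℕ}
    (h : ∀ m, m + 1 < N → t (m + 1) ∉ t '' Iic m) : InjOn t (Iio N) := by
  suffices ∀ j k, j < k → k < N → t j ≠ t k by
    intro j hj k hk hjk
    by_contra hne
    rcases lt_or_gt_of_ne hne with hlt | hlt
    exacts [this j k hlt hk hjk, this k j hlt hj hjk.symm]
  intro j k hjk hk htj
  obtain ⟨m, rfl⟩ := Nat.exists_eq_add_of_lt hjk
  exact h (j + m) (by omega) ⟨j, by simp, htj⟩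

theorem Set.image_Iic_ne_univ {α : Type*} [Finite α] (t : ℕ → α) {m : ℕ}
    (hm : m + 1 < Nat.card α) : t '' Iic m ≠ univ := by
  intro huniv
  have hcard := ncard_image_le (f := t) (finite_Iic m)
  rw [huniv, ncard_univ, ncard_Iic_nat] at hcard
  omega

theorem Prod.Lex.lt_of_fst_lt {α β : Type*} [LinearOrder α] [LinearOrder β] {p q : α ×ₗ β}
    (h : (ofLex p).1 < (ofLex q).1) : p < q :=
  Prod.Lex.monotone_fst_ofLex.reflect_lt h

namespace OrderedTraversal

variable {D : Type*} {n : ℕ} (σ : Fin 3 → Equiv.Perm D)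

theorem mem_keySet (f : D ≃ Fin n) (z : D) (i : Fin 3) :
    toLex ((f z : ℕ), (i : ℕ)) ∈ keySet σ f (σ i z) :=
  ⟨z, i, rfl, rfl⟩

theorem keySet_nonempty (f : D ≃ Fin n) (x : D) : (keySet σ f x).Nonempty :=
  ⟨_, by simpa using mem_keySet σ f ((σ 0).symm x) 0⟩

noncomputable def minKey (f : D ≃ Fin n) (x : D) : ℕ ×ₗ ℕ :=
  wellFounded_lt.min _ (keySet_nonempty σ f x)

theorem isLeast_minKey (f : D ≃ Fin n) (x : D) : IsLeast (keySet σ f x) (minKey σ f x) :=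
  ⟨wellFounded_lt.min_mem _ _, fun _ hk => wellFounded_lt.min_le hk⟩

theorem exists_isLeast_lt_iff (f : D ≃ Fin n) (x y : D) :
    (∃ kx ky : ℕ ×ₗ ℕ, IsLeast (keySet σ f x) kx ∧ IsLeast (keySet σ f y) ky ∧ kx < ky) ↔
      minKey σ f x < minKey σ f y := by
  constructor
  · rintro ⟨kx, ky, hx, hy, hlt⟩
    rwa [(isLeast_minKey σ f x).unique hx, (isLeast_minKey σ f y).unique hy]
  · exact fun h => ⟨_, _, isLeast_minKey σ f x, isLeast_minKey σ f y, h⟩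

theorem minKey_le (f : D ≃ Fin n) (z : D) (i : Fin 3) :
    minKey σ f (σ i z) ≤ toLex ((f z : ℕ), (i : ℕ)) :=
  (isLeast_minKey σ f _).2 (mem_keySet σ f z i)

def IsOrdered (d₀ : D) (f : D ≃ Fin n) : Prop :=
  ∀ x y : D, x ≠ d₀ → y ≠ d₀ → (f x < f y ↔ minKey σ f x < minKey σ f y)

variable {σ} {d₀ : D} {f g : D ≃ Fin n}

theorem minKey_le_of_eqOn {x : D} (hfg : EqOn f g {z | f z < f x})
    (hx : (ofLex (minKey σ f x)).1 < f x) : minKey σ g x ≤ minKey σ f x := by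
  obtain ⟨z, i, rfl, hkey⟩ := (isLeast_minKey σ f x).1
  rw [hkey] at hx ⊢
  rw [hfg (show f z < f (σ i z) from hx)]
  exact minKey_le σ g z i

section Transitive

variable [Finite D] [MulAction.IsPretransitive (Subgroup.closure (range σ)) D]

theorem IsOrdered.minKey_fst_lt (hf : IsOrdered σ d₀ f) (hf₀ : (f d₀ : ℕ) = 0) {x : D}
    (hx : x ≠ d₀) : (ofLex (minKey σ f x)).1 < f x := by
  by_contra! hle
  have hd₀ : f d₀ < f x := by
    rw [Fin.lt_def, hf₀]
    exact Nat.pos_of_ne_zero fun h => hx (f.injective (Fin.ext (h.trans hf₀.symm)))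
  have hclosed (i : Fin 3) : MapsTo (σ i) {y | f y < f x} {y | f y < f x} := by
    intro z hz
    by_cases hy : σ i z = d₀
    · rwa [hy]
    refine (hf _ x hy hx).2 ((minKey_le σ f z i).trans_lt (Prod.Lex.lt_of_fst_lt ?_))
    exact (Fin.lt_def.1 hz).trans_le hle
  have hx' : x ∈ {y | f y < f x} := by
    rw [eq_univ_of_forall_mapsTo_of_isPretransitive ⟨d₀, hd₀⟩ hclosed]
    exact mem_univ x
  exact lt_irrefl (f x) hx'

theorem IsOrdered.unique (hf : IsOrdered σ d₀ f) (hg : IsOrdered σ d₀ g)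
    (hf₀ : (f d₀ : ℕ) = 0) (hg₀ : (g d₀ : ℕ) = 0) : f = g := by
  ext1 x
  induction hk : f x using WellFoundedLT.induction generalizing x with
  | ind k ih =>
    subst hk
    have hbelow : EqOn f g {z | f z < f x} := fun z hz => ih _ hz z rfl
    have hbelow' := Equiv.eqOn_setOf_lt_right hbelow
    by_contra hne
    set w := g.symm (f x)
    have hgw : g w = f x := g.apply_symm_apply _
    have hwx : w ≠ x := fun h => hne (h ▸ hgw).symm
    have hx : x ≠ d₀ := fun h => hne (Fin.ext (by rw [h, hf₀, hg₀]))
    have hw : w ≠ d₀ := fun h => hx (f.injective (Fin.ext (by rw [← hgw, h, hf₀, hg₀])))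
    have hfxw : f x < f w :=
      lt_of_le_of_ne (not_lt.1 fun h => hwx (f.injective ((hbelow h).trans hgw)))
        fun h => hwx (f.injective h).symm
    have hgwx : g w < g x :=
      lt_of_le_of_ne (not_lt.1 fun h => hne (hbelow' (show g x < f x from hgw ▸ h)))
        fun h => hwx (g.injective h)
    refine lt_irrefl (minKey σ g x) ?_
    calc minKey σ g x
        ≤ minKey σ f x := minKey_le_of_eqOn hbelow (hf.minKey_fst_lt hf₀ hx)
      _ < minKey σ f w := (hf x w hx hw).1 hfxw
      _ ≤ minKey σ g w :=
        minKey_le_of_eqOn (fun z hz => (hbelow' (hgw ▸ hz)).symm) (hg.minKey_fst_lt hg₀ hw)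
      _ < minKey σ g x := (hg w x hw hx).1 hgwx

end Transitive

variable (σ)

/-- The colour `(ofLex p).2` is read modulo `3`; it is below `3` on the frontier. -/
def target (t : ℕ → D) (p : ℕ ×ₗ ℕ) : D := σ (Fin.ofNat 3 (ofLex p).2) (t (ofLex p).1)

def frontier (t : ℕ → D) (m : ℕ) : Set (ℕ ×ₗ ℕ) :=
  {p | (ofLex p).1 ≤ m ∧ (ofLex p).2 < 3 ∧ target σ t p ∉ t '' Iic m}

noncomputable def leastFrontier (t : ℕ → D) (m : ℕ) : ℕ ×ₗ ℕ :=
  if h : (frontier σ t m).Nonempty then wellFounded_lt.min _ h else toLex (0, 0)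

noncomputable def nextNode (t : ℕ → D) (m : ℕ) : D := target σ t (leastFrontier σ t m)

/-- Truncating the argument of `nextNode` to the first `m + 1` terms makes the recursion
well-founded; `traversal_succ` removes the truncation. -/
noncomputable def traversal (d₀ : D) : ℕ → D
  | 0 => d₀
  | m + 1 => nextNode σ (fun j => if j ≤ m then traversal d₀ j else d₀) m

variable {σ} {t t' : ℕ → D} {m : ℕ}

theorem isLeast_leastFrontier (h : (frontier σ t m).Nonempty) :
    IsLeast (frontier σ t m) (leastFrontier σ t m) := by
  rw [leastFrontier, dif_pos h]
  exact ⟨wellFounded_lt.min_mem _ _, fun _ hk => wellFounded_lt.min_le hk⟩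

theorem leastFrontier_fst_le : (ofLex (leastFrontier σ t m)).1 ≤ m := by
  by_cases h : (frontier σ t m).Nonempty
  · exact (isLeast_leastFrontier h).1.1
  · rw [leastFrontier, dif_neg h]
    exact Nat.zero_le m

theorem nextNode_congr (h : EqOn t t' (Iic m)) : nextNode σ t m = nextNode σ t' m := by
  have hfrontier : frontier σ t m = frontier σ t' m :=
    Set.ext fun p => and_congr_right fun hp => by rw [target, target, h hp, h.image_eq]
  have hleast : leastFrontier σ t m = leastFrontier σ t' m := by
    unfold leastFrontier
    rw [hfrontier]
  rw [nextNode, nextNode, ← hleast, target, target, h leastFrontier_fst_le]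

theorem traversal_zero : traversal σ d₀ 0 = d₀ := by
  rw [traversal]

theorem traversal_succ : traversal σ d₀ (m + 1) = nextNode σ (traversal σ d₀) m := by
  rw [traversal]
  exact nextNode_congr fun j hj => if_pos hj

theorem nextNode_notMem (h : (frontier σ t m).Nonempty) : nextNode σ t m ∉ t '' Iic m :=
  (isLeast_leastFrontier h).1.2.2

theorem leastFrontier_lt_leastFrontier {a b : ℕ} (hab : a < b)
    (hne : (frontier σ t b).Nonempty) (hnext : nextNode σ t a ∈ t '' Iic b) :
    leastFrontier σ t a < leastFrontier σ t b := by
  obtain ⟨⟨-, hp₂, hp₃⟩, -⟩ := isLeast_leastFrontier hne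
  rcases le_or_gt (ofLex (leastFrontier σ t b)).1 a with hle | hlt
  · have hmem : leastFrontier σ t b ∈ frontier σ t a :=
      ⟨hle, hp₂, fun h => hp₃ (image_mono (Iic_subset_Iic.2 hab.le) h)⟩
    refine ((isLeast_leastFrontier ⟨_, hmem⟩).2 hmem).lt_of_ne fun heq => hp₃ ?_
    rwa [← heq]
  · exact Prod.Lex.lt_of_fst_lt (leastFrontier_fst_le.trans_lt hlt)

section Transitive

variable [Fintype D] [MulAction.IsPretransitive (Subgroup.closure (range σ)) D]

theorem frontier_nonempty (h : t '' Iic m ≠ univ) : (frontier σ t m).Nonempty := by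
  by_contra hempty
  refine h (eq_univ_of_forall_mapsTo_of_isPretransitive (σ := σ) ⟨t 0, 0, Nat.zero_le m, rfl⟩
    fun i => ?_)
  rintro _ ⟨j, hj, rfl⟩
  by_contra hnot
  exact hempty ⟨toLex (j, i), hj, i.isLt, by rwa [target, ofLex_toLex, Fin.ofNat_val_eq_self]⟩

theorem frontier_traversal_nonempty (hm : m + 1 < Fintype.card D) :
    (frontier σ (traversal σ d₀) m).Nonempty :=
  frontier_nonempty (image_Iic_ne_univ _ (Nat.card_eq_fintype_card (α := D) ▸ hm))

theorem traversal_succ_notMem (hm : m + 1 < Fintype.card D) :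
    traversal σ d₀ (m + 1) ∉ traversal σ d₀ '' Iic m := by
  rw [traversal_succ]
  exact nextNode_notMem (frontier_traversal_nonempty hm)

theorem strictMonoOn_leastFrontier_traversal :
    StrictMonoOn (leastFrontier σ (traversal σ d₀)) (Iio (Fintype.card D - 1)) := by
  intro a _ b hb hab
  refine leastFrontier_lt_leastFrontier hab (frontier_traversal_nonempty (by grind)) ?_
  exact ⟨a + 1, hab, traversal_succ⟩

variable (σ d₀) in
noncomputable def traversalNumbering : D ≃ Fin (Fintype.card D) :=
  (Equiv.ofBijective (fun k : Fin (Fintype.card D) => traversal σ d₀ k)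
    ((Fintype.bijective_iff_injective_and_card _).2
      ⟨fun a b h => Fin.ext (injOn_Iio_of_forall_notMem_image_Iic
        (fun _ => traversal_succ_notMem) a.isLt b.isLt h), Fintype.card_fin _⟩)).symm

theorem traversalNumbering_traversal {j : ℕ} (hj : j < Fintype.card D) :
    traversalNumbering σ d₀ (traversal σ d₀ j) = ⟨j, hj⟩ :=
  (Equiv.symm_apply_eq _).2 rfl

theorem traversal_traversalNumbering (x : D) :
    traversal σ d₀ (traversalNumbering σ d₀ x) = x :=
  Equiv.ofBijective_apply_symm_apply (fun k : Fin (Fintype.card D) => traversal σ d₀ k) _ x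

theorem traversalNumbering_pos {x : D} (hx : x ≠ d₀) :
    0 < (traversalNumbering σ d₀ x : ℕ) :=
  Nat.pos_of_ne_zero fun h =>
    hx (by rw [← traversal_traversalNumbering (σ := σ) x, h, traversal_zero])

theorem minKey_traversal_succ (hm : m + 1 < Fintype.card D) :
    minKey σ (traversalNumbering σ d₀) (traversal σ d₀ (m + 1)) =
      leastFrontier σ (traversal σ d₀) m := by
  obtain ⟨⟨hp₁, hp₂, -⟩, hleast⟩ :=
    isLeast_leastFrontier (frontier_traversal_nonempty (σ := σ) (d₀ := d₀) hm)
  set p := leastFrontier σ (traversal σ d₀) m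
  refine (isLeast_minKey σ _ _).unique
    ⟨⟨traversal σ d₀ (ofLex p).1, Fin.ofNat 3 (ofLex p).2, ?_, ?_⟩, ?_⟩
  · rw [traversal_succ]
    rfl
  · rw [traversalNumbering_traversal (by omega), Fin.val_ofNat, Nat.mod_eq_of_lt hp₂]
    rfl
  · rintro _ ⟨z, i, hz, rfl⟩
    rcases le_or_gt (traversalNumbering σ d₀ z : ℕ) m with hle | hlt
    · refine hleast ⟨hle, i.isLt, ?_⟩
      rw [target, ofLex_toLex, Fin.ofNat_val_eq_self, traversal_traversalNumbering, hz]
      exact traversal_succ_notMem hm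
    · exact le_of_lt (Prod.Lex.lt_of_fst_lt (hp₁.trans_lt hlt))

theorem minKey_traversalNumbering {x : D} (hx : x ≠ d₀) :
    minKey σ (traversalNumbering σ d₀) x =
      leastFrontier σ (traversal σ d₀) (traversalNumbering σ d₀ x - 1) := by
  obtain ⟨m, hm⟩ := Nat.exists_eq_add_of_lt (traversalNumbering_pos (σ := σ) hx)
  rw [zero_add] at hm
  calc minKey σ (traversalNumbering σ d₀) x
      = minKey σ (traversalNumbering σ d₀) (traversal σ d₀ (m + 1)) := by
        rw [← hm, traversal_traversalNumbering]
    _ = leastFrontier σ (traversal σ d₀) m := minKey_traversal_succ (by omega)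
    _ = leastFrontier σ (traversal σ d₀) (traversalNumbering σ d₀ x - 1) := by
        rw [hm, Nat.add_sub_cancel]

theorem isOrdered_traversalNumbering : IsOrdered σ d₀ (traversalNumbering σ d₀) := by
  intro x y hx hy
  have hxpos := traversalNumbering_pos (σ := σ) hx
  have hypos := traversalNumbering_pos (σ := σ) hy
  have hxlt := (traversalNumbering σ d₀ x).isLt
  have hylt := (traversalNumbering σ d₀ y).isLt
  rw [minKey_traversalNumbering hx, minKey_traversalNumbering hy,
    strictMonoOn_leastFrontier_traversal.lt_iff_lt (by simp; omega) (by simp; omega),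
    Fin.lt_def]
  omega

end Transitive

end OrderedTraversal

open OrderedTraversal

theorem exists_unique_ordered_traversal_general {D : Type*} [Fintype D] {n : ℕ}
    (hn : 1 ≤ n) (hcard : Fintype.card D = n)
    (σ : Fin 3 → Equiv.Perm D)
    (htrans : ∀ x y : D, ∃ g ∈ Subgroup.closure (Set.range σ), g x = y)
    (d₀ : D) :
    ∃! f : D ≃ Fin n, f d₀ = ⟨0, hn⟩ ∧
      ∀ x y : D, x ≠ d₀ → y ≠ d₀ →
        (f x < f y ↔
          ∃ kx ky : ℕ ×ₗ ℕ, IsLeast (keySet σ f x) kx ∧ IsLeast (keySet σ f y) ky ∧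
            kx < ky) := by
  subst hcard
  have : MulAction.IsPretransitive (Subgroup.closure (range σ)) D :=
    ⟨fun x y => let ⟨g, hg, hgx⟩ := htrans x y; ⟨⟨g, hg⟩, hgx⟩⟩
  simp only [exists_isLeast_lt_iff]
  have hroot : traversalNumbering σ d₀ d₀ = ⟨0, hn⟩ := by
    simpa only [traversal_zero] using traversalNumbering_traversal (σ := σ) (d₀ := d₀) hn
  refine ⟨traversalNumbering σ d₀, ⟨hroot, isOrdered_traversalNumbering⟩, ?_⟩
  rintro g ⟨hg₀, hg⟩
  exact (isOrdered_traversalNumbering.unique hg (congrArg Fin.val hroot)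
    (congrArg Fin.val hg₀)).symm

/-- Let `D` be a finite set with `n ≥ 1` elements, `σ₀, σ₁, σ₂` involutions of `D`
whose generated permutation group acts transitively (a Delaney–Dress graph), and
`d₀ ∈ D` an initial node.  For a bijection `f : D ≃ Fin n` let `key_f(x)` be the
lexicographic minimum of `{(f z, i) : σᵢ z = x}`.  Then there is exactly one bijection
`f` with `f d₀ = 0` such that for all `x, y ≠ d₀`, `f x < f y` iff
`key_f(x) <ₗₑₓ key_f(y)`: the unique ordered (breadth-first) traversal from `d₀`. -/
theorem exists_unique_ordered_traversal {D : Type*} [Fintype D] {n : ℕ}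
    (hn : 1 ≤ n) (hcard : Fintype.card D = n)
    (σ : Fin 3 → Equiv.Perm D) (hinv : ∀ i, σ i * σ i = 1)
    (htrans : ∀ x y : D, ∃ g ∈ Subgroup.closure (Set.range σ), g x = y)
    (d₀ : D) :
    ∃! f : D ≃ Fin n, f d₀ = ⟨0, hn⟩ ∧
      ∀ x y : D, x ≠ d₀ → y ≠ d₀ →
        (f x < f y ↔
          ∃ kx ky : ℕ ×ₗ ℕ, IsLeast (keySet σ f x) kx ∧ IsLeast (keySet σ f y) ky ∧
            kx < ky) :=
  exists_unique_ordered_traversal_general hn hcard σ htrans d₀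
end
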